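/- Let X be a binary source with Pr(X = 1) = p ∈ (0,1) and Pr(X = 0) = 1 − p, and let the distortion measure be δ(0,0)=1, δ(0,1)=2, δ(1,0)=1, δ(1,1)=0. Define the rate-distortion function R(D) as the minimum of the mutual information I(X;X̂) = Σ_{j,k ∈ {0,1}} p_j w(k|j) log₂( w(k|j) / (p_0 w(k|0) + p_1 w(k|1)) ) (with p_1 = p, p_0 = 1 − p) over all conditional probabilities w(k|j) ≥ 0 with w(0|j) + w(1|j) = 1 for each j and expected distortion Σ_{j,k} p_j w(k|j) δ(j,k) ≤ D. Then for every D with 1 − p ≤ D ≤ min{1, 2(1−p)}, R(D) = max{H(p) − H(D + p − 1), 0}, and R(D) = 0 for all D ≥ min{1, 2(1−p)}. -/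

import Mathlib

/-!
The expected distortion of a test channel `w` is `1 - p` plus its Hamming error probability
`e(w) = (1 - p) w(1|0) + p w(0|1)`, so `R(D)` is the Hamming rate-distortion function of the
source at `d = D + p - 1`. For any backward channel `r(j|k)`, Gibbs' inequality gives
`I(X;X̂) ≥ E log r(X|X̂) + H(p)` (in nats), with equality when the joint law of `(X, X̂)` is
`Pr(X̂ = k) r(j|k)`. With `r` the binary symmetric channel of crossover `d` the right side is at
least `H(p) - H(d)` as soon as `e(w) ≤ d ≤ 1/2`, and equality is attained for `d < min(p, 1-p)`
by reversing that channel. For `d ≥ min(p, 1-p)` a constant output is admissible and carries no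
information.
-/

/-- The binary entropy function (base 2), with `H 0 = H 1 = 0`. -/
noncomputable def H2 (u : ℝ) : ℝ := -u * Real.logb 2 u - (1 - u) * Real.logb 2 (1 - u)

/-- The distortion measure `δ(0,0)=1, δ(0,1)=2, δ(1,0)=1, δ(1,1)=0`. -/
def dm (j k : Fin 2) : ℝ := if k = 0 then 1 else if j = 0 then 2 else 0

/-- The mutual information `I(X;X̂)` of the binary source `Pr(X=1) = p`,
`Pr(X=0) = 1-p` through the test channel `w` (`w j k = Pr(X̂=k | X=j)`). -/
noncomputable def mi (p : ℝ) (w : Fin 2 → Fin 2 → ℝ) : ℝ :=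
  ∑ j : Fin 2, ∑ k : Fin 2, (if j = 0 then 1 - p else p) * w j k *
    Real.logb 2 (w j k / ((1 - p) * w 0 k + p * w 1 k))

/-- The rate-distortion function `R(D)`: the minimum of `I(X;X̂)` over all conditional
probabilities `w(k|j) ≥ 0` with `w(0|j) + w(1|j) = 1` and expected distortion `≤ D`. -/
noncomputable def rdFun (p D : ℝ) : ℝ :=
  sInf {r : ℝ | ∃ w : Fin 2 → Fin 2 → ℝ,
    (∀ j k, 0 ≤ w j k) ∧ (∀ j, w j 0 + w j 1 = 1) ∧
    (∑ j : Fin 2, ∑ k : Fin 2, (if j = 0 then 1 - p else p) * w j k * dm j k) ≤ D ∧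
    r = mi p w}

open Real Finset

structure IsChannel (w : Fin 2 → Fin 2 → ℝ) : Prop where
  nonneg : ∀ j k, 0 ≤ w j k
  sum_eq_one : ∀ j, w j 0 + w j 1 = 1

def srcProb (p : ℝ) (j : Fin 2) : ℝ := if j = 0 then 1 - p else p

def outProb (p : ℝ) (w : Fin 2 → Fin 2 → ℝ) (k : Fin 2) : ℝ := (1 - p) * w 0 k + p * w 1 k

def errorProb (p : ℝ) (w : Fin 2 → Fin 2 → ℝ) : ℝ := (1 - p) * w 0 1 + p * w 1 0

def bsc (d : ℝ) (j k : Fin 2) : ℝ := if j = k then 1 - d else d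

lemma bsc_nonneg {d : ℝ} (hd0 : 0 ≤ d) (hd1 : d ≤ 1) (j k : Fin 2) : 0 ≤ bsc d j k := by
  unfold bsc
  split_ifs <;> linarith

lemma bsc_zero_add_bsc_one (d : ℝ) (k : Fin 2) : bsc d 0 k + bsc d 1 k = 1 := by
  fin_cases k <;> simp [bsc]

lemma outProb_eq_add (p : ℝ) (w : Fin 2 → Fin 2 → ℝ) (k : Fin 2) :
    outProb p w k = srcProb p 0 * w 0 k + srcProb p 1 * w 1 k :=
  rfl

lemma errorProb_eq_add (p : ℝ) (w : Fin 2 → Fin 2 → ℝ) :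
    errorProb p w = srcProb p 0 * w 0 1 + srcProb p 1 * w 1 0 :=
  rfl

lemma H2_eq_binEntropy_div (u : ℝ) : H2 u = binEntropy u / log 2 := by
  simp only [H2, binEntropy, logb, log_inv]
  ring

lemma binEntropy_eq_neg_mul_log_sub (u : ℝ) :
    binEntropy u = -(u * log u) - (1 - u) * log (1 - u) := by
  simp only [binEntropy, log_inv]
  ring

lemma mul_log_div_self (x : ℝ) : x * log (x / x) = 0 := by
  rcases eq_or_ne x 0 with rfl | hx <;> simp [*]

lemma sub_le_mul_log_div {a b : ℝ} (ha : 0 ≤ a) (hb : 0 ≤ b) (hab : 0 < a → 0 < b) :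
    a - b ≤ a * log (a / b) := by
  rcases ha.eq_or_lt with rfl | ha
  · simpa using hb
  have hlog := one_sub_inv_le_log_of_pos (div_pos ha (hab ha))
  rw [inv_div] at hlog
  calc a - b = a * (1 - b / a) := by field_simp
    _ ≤ a * log (a / b) := mul_le_mul_of_nonneg_left hlog ha.le

lemma mul_log_div_eq_add {x w m r : ℝ} (hx : x ≠ 0) (hm : w ≠ 0 → m ≠ 0)
    (hr : w ≠ 0 → r ≠ 0) :
    x * w * log (w / m) = x * w * log (x * w / (m * r)) + x * w * log r - x * w * log x := by
  rcases eq_or_ne w 0 with rfl | hw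
  · simp
  rw [log_div hw (hm hw), log_div (mul_ne_zero hx hw) (mul_ne_zero (hm hw) (hr hw)),
    log_mul hx hw, log_mul (hm hw) (hr hw)]
  ring

section Channel

variable {p : ℝ} {w : Fin 2 → Fin 2 → ℝ}

lemma srcProb_pos (hp0 : 0 < p) (hp1 : p < 1) (j : Fin 2) : 0 < srcProb p j := by
  fin_cases j <;> simp only [srcProb, Fin.isValue, Fin.zero_eta, Fin.mk_one, ↓reduceIte,
    one_ne_zero] <;> linarith

lemma mi_mul_log_two :
    mi p w * log 2 = ∑ j, ∑ k, srcProb p j * w j k * log (w j k / outProb p w k) := by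
  simp only [mi, logb, sum_mul, mul_div_assoc', div_mul_cancel₀ _ (log_pos one_lt_two).ne']
  rfl

lemma outProb_pos (hp0 : 0 < p) (hp1 : p < 1) (hw : IsChannel w) {j k : Fin 2}
    (hjk : w j k ≠ 0) :
    0 < outProb p w k := by
  have hpos := mul_pos (srcProb_pos hp0 hp1 j) ((hw.nonneg j k).lt_of_ne' hjk)
  have h0 := mul_nonneg (srcProb_pos hp0 hp1 0).le (hw.nonneg 0 k)
  have h1 := mul_nonneg (srcProb_pos hp0 hp1 1).le (hw.nonneg 1 k)
  rw [outProb_eq_add]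
  fin_cases j <;> simp only [Fin.zero_eta, Fin.mk_one] at hpos <;> linarith

lemma sum_mul_log_srcProb (hw : IsChannel w) :
    ∑ j, ∑ k, srcProb p j * w j k * log (srcProb p j) = -binEntropy p := by
  simp only [Fin.sum_univ_two, srcProb, binEntropy, log_inv, Fin.isValue, ↓reduceIte, one_ne_zero]
  linear_combination (1 - p) * log (1 - p) * hw.sum_eq_one 0 + p * log p * hw.sum_eq_one 1

lemma sum_mul_log_bsc (hw : IsChannel w) (d : ℝ) :
    ∑ j, ∑ k, srcProb p j * w j k * log (bsc d j k) =
      (1 - errorProb p w) * log (1 - d) + errorProb p w * log d := by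
  simp only [Fin.sum_univ_two, srcProb, bsc, errorProb, Fin.isValue, ↓reduceIte, zero_ne_one,
    one_ne_zero]
  linear_combination (1 - p) * log (1 - d) * hw.sum_eq_one 0 + p * log (1 - d) * hw.sum_eq_one 1

lemma mi_mul_log_two_eq (hp0 : 0 < p) (hp1 : p < 1) (hw : IsChannel w) {r : Fin 2 → Fin 2 → ℝ}
    (hr : ∀ j k, w j k ≠ 0 → r j k ≠ 0) :
    mi p w * log 2 =
      ∑ j, ∑ k, srcProb p j * w j k * log (srcProb p j * w j k / (outProb p w k * r j k)) +
        ∑ j, ∑ k, srcProb p j * w j k * log (r j k) + binEntropy p := by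
  have hterm : ∀ j k, srcProb p j * w j k * log (w j k / outProb p w k) =
      srcProb p j * w j k * log (srcProb p j * w j k / (outProb p w k * r j k)) +
        srcProb p j * w j k * log (r j k) - srcProb p j * w j k * log (srcProb p j) :=
    fun j k => mul_log_div_eq_add (srcProb_pos hp0 hp1 j).ne'
      (fun h => (outProb_pos hp0 hp1 hw h).ne') (hr j k)
  simp only [mi_mul_log_two, hterm, sum_sub_distrib, sum_add_distrib, sum_mul_log_srcProb hw]
  ring

lemma sum_mul_log_add_binEntropy_le (hp0 : 0 < p) (hp1 : p < 1) (hw : IsChannel w)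
    {r : Fin 2 → Fin 2 → ℝ} (hr0 : ∀ j k, 0 ≤ r j k) (hr1 : ∀ k, r 0 k + r 1 k = 1)
    (hr : ∀ j k, w j k ≠ 0 → r j k ≠ 0) :
    ∑ j, ∑ k, srcProb p j * w j k * log (r j k) + binEntropy p ≤ mi p w * log 2 := by
  rw [mi_mul_log_two_eq hp0 hp1 hw hr]
  have hgibbs : ∑ j, ∑ k, (srcProb p j * w j k - outProb p w k * r j k) ≤
      ∑ j, ∑ k, srcProb p j * w j k * log (srcProb p j * w j k / (outProb p w k * r j k)) := by
    refine sum_le_sum fun j _ => sum_le_sum fun k _ => sub_le_mul_log_div ?_ ?_ fun ha => ?_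
    · exact mul_nonneg (srcProb_pos hp0 hp1 j).le (hw.nonneg j k)
    · exact mul_nonneg (add_nonneg (mul_nonneg (by linarith) (hw.nonneg 0 k))
        (mul_nonneg hp0.le (hw.nonneg 1 k))) (hr0 j k)
    · have hwjk : w j k ≠ 0 := fun h => by simp [h] at ha
      exact mul_pos (outProb_pos hp0 hp1 hw hwjk) ((hr0 j k).lt_of_ne' (hr j k hwjk))
  have htotal : ∑ j, ∑ k, (srcProb p j * w j k - outProb p w k * r j k) = 0 := by
    simp only [Fin.sum_univ_two, srcProb, outProb, Fin.isValue, ↓reduceIte, one_ne_zero]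
    linear_combination
      -((1 - p) * w 0 0 + p * w 1 0) * hr1 0 - ((1 - p) * w 0 1 + p * w 1 1) * hr1 1
  linarith

lemma mi_nonneg (hp0 : 0 < p) (hp1 : p < 1) (hw : IsChannel w) : 0 ≤ mi p w := by
  have h := sum_mul_log_add_binEntropy_le hp0 hp1 hw (r := fun j _ => srcProb p j)
    (fun j _ => (srcProb_pos hp0 hp1 j).le) (fun _ => by simp [srcProb])
    (fun j _ _ => (srcProb_pos hp0 hp1 j).ne')
  rw [sum_mul_log_srcProb hw, neg_add_cancel] at h
  exact nonneg_of_mul_nonneg_left h (log_pos one_lt_two)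

lemma binEntropy_sub_le_mi_mul_log_two (hp0 : 0 < p) (hp1 : p < 1) (hw : IsChannel w) {d : ℝ}
    (hd0 : 0 ≤ d) (hd : d ≤ 2⁻¹) (he : errorProb p w ≤ d) :
    binEntropy p - binEntropy d ≤ mi p w * log 2 := by
  -- for `d = 0` this holds because `errorProb p w ≤ 0` kills the off-diagonal entries of `w`
  have hbsc : ∀ j k, w j k ≠ 0 → bsc d j k ≠ 0 := by
    unfold errorProb at he
    have h01 := mul_nonneg (sub_nonneg.2 hp1.le) (hw.nonneg 0 1)
    have h10 := mul_nonneg hp0.le (hw.nonneg 1 0)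
    intro j k hjk
    fin_cases j <;> fin_cases k <;>
      simp only [bsc, Fin.isValue, Fin.zero_eta, Fin.mk_one, ↓reduceIte, zero_ne_one, one_ne_zero,
        ne_eq] at hjk ⊢
    · linarith
    · linarith [mul_pos (sub_pos.2 hp1) ((hw.nonneg 0 1).lt_of_ne' hjk)]
    · linarith [mul_pos hp0 ((hw.nonneg 1 0).lt_of_ne' hjk)]
    · linarith
  have h := sum_mul_log_add_binEntropy_le hp0 hp1 hw (r := bsc d)
    (bsc_nonneg hd0 (by linarith)) (bsc_zero_add_bsc_one d) hbsc
  have hlog : log d ≤ log (1 - d) := by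
    rcases hd0.eq_or_lt with rfl | hd0
    · simp
    · exact log_le_log hd0 (by linarith)
  rw [sum_mul_log_bsc hw] at h
  rw [binEntropy_eq_neg_mul_log_sub d]
  linarith [mul_nonneg (sub_nonneg.2 he) (sub_nonneg.2 hlog)]

lemma exists_isChannel_mi_mul_log_two_eq (hp0 : 0 < p) (hp1 : p < 1) {d : ℝ} (hd0 : 0 ≤ d)
    (hdp : d < p) (hdq : d < 1 - p) :
    ∃ w, IsChannel w ∧ errorProb p w = d ∧ mi p w * log 2 = binEntropy p - binEntropy d := by
  have h2d : 0 < 1 - 2 * d := by linarith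
  set c := (1 - 2 * d)⁻¹
  have hc : c * (1 - 2 * d) = 1 := inv_mul_cancel₀ h2d.ne'
  -- the output law for which `q k * bsc d j k` has input marginal `srcProb p j`
  set q : Fin 2 → ℝ := ![c * (1 - p - d), c * (p - d)]
  have hq_nonneg : ∀ k, 0 ≤ q k := by
    intro k
    fin_cases k <;> exact mul_nonneg (inv_nonneg.2 h2d.le) (by linarith)
  have hq_sum : q 0 + q 1 = 1 := by
    simp only [q, Matrix.cons_val_zero, Matrix.cons_val_one, Matrix.cons_val_fin_one]
    linear_combination hc
  have hq_bsc : ∀ j, q 0 * bsc d j 0 + q 1 * bsc d j 1 = srcProb p j := by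
    intro j
    fin_cases j <;> simp only [q, bsc, srcProb, Fin.isValue, Fin.zero_eta, Fin.mk_one, ↓reduceIte,
      zero_ne_one, one_ne_zero, Matrix.cons_val_zero, Matrix.cons_val_one, Matrix.cons_val_fin_one]
    · linear_combination (1 - p) * hc
    · linear_combination p * hc
  set w : Fin 2 → Fin 2 → ℝ := fun j k => q k * bsc d j k / srcProb p j with hw_def
  have hjoint : ∀ j k, srcProb p j * w j k = q k * bsc d j k := fun j k =>
    mul_div_cancel₀ _ (srcProb_pos hp0 hp1 j).ne'
  have hw : IsChannel w := by
    refine ⟨fun j k => ?_, fun j => ?_⟩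
    · exact div_nonneg (mul_nonneg (hq_nonneg k) (bsc_nonneg hd0 (by linarith) j k))
        (srcProb_pos hp0 hp1 j).le
    · rw [hw_def, ← add_div, hq_bsc, div_self (srcProb_pos hp0 hp1 j).ne']
  have hout : ∀ k, outProb p w k = q k := fun k => by
    rw [outProb_eq_add, hjoint, hjoint, ← mul_add, bsc_zero_add_bsc_one, mul_one]
  have he : errorProb p w = d := by
    rw [errorProb_eq_add, hjoint, hjoint]
    simp only [bsc, Fin.isValue, zero_ne_one, one_ne_zero, ↓reduceIte]
    linear_combination d * hq_sum
  have hr : ∀ j k, w j k ≠ 0 → bsc d j k ≠ 0 := fun j k h hb => h (by simp [w, hb])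
  refine ⟨w, hw, he, ?_⟩
  rw [mi_mul_log_two_eq hp0 hp1 hw hr, sum_mul_log_bsc hw, he]
  simp only [hjoint, hout, mul_log_div_self, sum_const_zero, zero_add,
    binEntropy_eq_neg_mul_log_sub]
  ring

lemma mi_const (p : ℝ) (q : Fin 2 → ℝ) : mi p (fun _ => q) = 0 := by
  refine sum_eq_zero fun j _ => sum_eq_zero fun k _ => ?_
  rw [show (1 - p) * q k + p * q k = q k by ring, logb, mul_assoc, mul_div_assoc',
    mul_log_div_self, zero_div, mul_zero]

lemma isLeast_zero (hp0 : 0 < p) (hp1 : p < 1) {d : ℝ} (hd : min p (1 - p) ≤ d) :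
    IsLeast (mi p '' {w | IsChannel w ∧ errorProb p w ≤ d}) 0 := by
  refine ⟨?_, ?_⟩
  · rcases min_le_iff.mp hd with h | h
    · refine ⟨fun _ => ![1, 0], ⟨⟨?_, fun _ => ?_⟩, ?_⟩, mi_const p _⟩
      · intro _ k; fin_cases k <;> simp
      · simp
      · simpa [errorProb] using h
    · refine ⟨fun _ => ![0, 1], ⟨⟨?_, fun _ => ?_⟩, ?_⟩, mi_const p _⟩
      · intro _ k; fin_cases k <;> simp
      · simp
      · simpa [errorProb] using h
  · rintro _ ⟨w, ⟨hw, -⟩, rfl⟩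
    exact mi_nonneg hp0 hp1 hw

lemma isLeast_H2_sub (hp0 : 0 < p) (hp1 : p < 1) {d : ℝ} (hd0 : 0 ≤ d)
    (hd : d < min p (1 - p)) :
    IsLeast (mi p '' {w | IsChannel w ∧ errorProb p w ≤ d}) (H2 p - H2 d) := by
  rw [lt_min_iff] at hd
  have hlog2 := log_pos one_lt_two
  rw [H2_eq_binEntropy_div, H2_eq_binEntropy_div, ← sub_div]
  obtain ⟨w, hw, he, hmi⟩ := exists_isChannel_mi_mul_log_two_eq hp0 hp1 hd0 hd.1 hd.2
  refine ⟨⟨w, ⟨hw, he.le⟩, by rw [← hmi, mul_div_cancel_right₀ _ hlog2.ne']⟩, ?_⟩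
  rintro _ ⟨w, ⟨hw, he⟩, rfl⟩
  rw [div_le_iff₀ hlog2]
  exact binEntropy_sub_le_mi_mul_log_two hp0 hp1 hw hd0 (by linarith) he

lemma sum_mul_dm_eq (hw : w 0 0 + w 0 1 = 1) :
    ∑ j : Fin 2, ∑ k : Fin 2, (if j = 0 then 1 - p else p) * w j k * dm j k =
      1 - p + errorProb p w := by
  simp only [Fin.sum_univ_two, dm, errorProb, Fin.isValue, ↓reduceIte, one_ne_zero]
  linear_combination (1 - p) * hw

lemma rdFun_eq_of_isLeast {D v : ℝ}
    (h : IsLeast (mi p '' {w | IsChannel w ∧ errorProb p w ≤ D + p - 1}) v) :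
    rdFun p D = v := by
  rw [← h.csInf_eq, rdFun]
  congr 1
  ext r
  constructor
  · rintro ⟨w, hw0, hw1, hD, rfl⟩
    rw [sum_mul_dm_eq (hw1 0)] at hD
    exact ⟨w, ⟨⟨hw0, hw1⟩, by linarith⟩, rfl⟩
  · rintro ⟨w, ⟨hw, he⟩, rfl⟩
    exact ⟨w, hw.nonneg, hw.sum_eq_one, by rw [sum_mul_dm_eq (hw.sum_eq_one 0)]; linarith, rfl⟩

end Channel

/-- For a binary source with `Pr(X=1) = p ∈ (0,1)` and the distortion
measure `δ(0,0)=1, δ(0,1)=2, δ(1,0)=1, δ(1,1)=0`: for every `D` with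
`1-p ≤ D ≤ min {1, 2(1-p)}`, `R(D) = max {H(p) - H(D+p-1), 0}`, and `R(D) = 0` for all
`D ≥ min {1, 2(1-p)}`. -/
theorem stmt_14 (p : ℝ) (hp : 0 < p) (hp1 : p < 1) :
    (∀ D, 1 - p ≤ D → D ≤ min 1 (2 * (1 - p)) →
        rdFun p D = max (H2 p - H2 (D + p - 1)) 0) ∧
      (∀ D, min 1 (2 * (1 - p)) ≤ D → rdFun p D = 0) := by
  have hmin : min 1 (2 * (1 - p)) = min p (1 - p) + (1 - p) := by
    rw [← min_add_add_right]; congr 1 <;> ring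
  have hzero : ∀ D, min 1 (2 * (1 - p)) ≤ D → rdFun p D = 0 := fun D hD =>
    rdFun_eq_of_isLeast (isLeast_zero hp hp1 (by linarith))
  refine ⟨fun D hD1 hD2 => ?_, hzero⟩
  rcases (show D + p - 1 ≤ min p (1 - p) by linarith).lt_or_eq with hlt | heq
  · have hL := isLeast_H2_sub hp hp1 (by linarith) hlt
    obtain ⟨w, ⟨hw, -⟩, hv⟩ := hL.1
    rw [rdFun_eq_of_isLeast hL, max_eq_left (hv ▸ mi_nonneg hp hp1 hw)]
  · have hH : H2 (D + p - 1) = H2 p := by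
      simp only [heq, H2_eq_binEntropy_div]
      rcases min_choice p (1 - p) with h | h <;> simp [h]
    rw [hH, sub_self, max_self, hzero D (by linarith)]
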